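/- Let n ≥ 1, η ≥ 1, and let N be a nonempty finite set of tuples u : Fin n → ℕ with Σ_j u j = η for every u ∈ N. Define the relation E on ℕ-tuples by: for α, γ : Fin n → ℕ, E α γ if and only if there exists u ∈ N with γ = α + u (componentwise). Then the directed graph (Fin n → ℕ, E) is a generalized directed semi-tree with parameter c' ≤ card N; explicitly: (a) E has no circuit, i.e., there is no α with Relation.TransGen E α α, and (b) for all distinct α, γ : Fin n → ℕ, the set Chi(α) ∩ Chi(γ) = {w | E α w ∧ E γ w} has at most card N elements (the countability of the set of connected components being automatic since the vertex set is countable). (This is the graph induced by the multiplication operator by a homogeneous polynomial θ_i = Σ_{u ∈ N_i} a_u^{(i)} z^u of degree η_i on the Bergman space of a complete Reinhardt domain, acting on the monomial basis.) -/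

import Mathlib

/-! A step `α → α + u` raises the total degree `∑ j, α j` by `η ≥ 1`, so no walk returns to its
start; and every vertex `α` has at most `card N` children `α + u`, so in particular two vertices
have at most `card N` common children. -/

theorem Relation.not_transGen_self_of_lt {α β : Type*} [Preorder β] {r : α → α → Prop}
    (f : α → β) (hf : ∀ a b, r a b → f a < f b) (a : α) : ¬ Relation.TransGen r a a := by
  intro h
  have hlt : Relation.TransGen (· < ·) (f a) (f a) := h.lift f hf
  rw [Relation.transGen_eq_self] at hlt
  exact lt_irrefl _ hlt

theorem setOf_eq_image_add_of_iff_exists {M : Type*} [Add M] {N : Finset M}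
    {E : M → M → Prop} (hE : ∀ a b, E a b ↔ ∃ u ∈ N, b = a + u) (a : M) :
    {w | E a w} = (a + ·) '' N := by
  ext w
  simp only [Set.mem_ofPred_eq, hE, Set.mem_image, Finset.mem_coe, eq_comm]

theorem ncard_setOf_le_card_of_iff_exists {M : Type*} [Add M] {N : Finset M}
    {E : M → M → Prop} (hE : ∀ a b, E a b ↔ ∃ u ∈ N, b = a + u) (a : M) :
    {w | E a w}.ncard ≤ N.card := by
  rw [setOf_eq_image_add_of_iff_exists hE, ← Set.ncard_coe_finset N]
  exact Set.ncard_image_le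

theorem sum_add_eq_of_sum_eq {n η : ℕ} {u : Fin n → ℕ} (hu : ∑ j, u j = η) (α : Fin n → ℕ) :
    ∑ j, (α + u) j = ∑ j, α j + η := by
  simp only [Pi.add_apply, Finset.sum_add_distrib, hu]

theorem stmt_15_general (n η : ℕ) (hη : 1 ≤ η)
    (N : Finset (Fin n → ℕ))
    (hdeg : ∀ u ∈ N, (∑ j : Fin n, u j) = η)
    (E : (Fin n → ℕ) → (Fin n → ℕ) → Prop)
    (hE : ∀ α γ : Fin n → ℕ, E α γ ↔ ∃ u ∈ N, γ = α + u) :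
    (¬ ∃ α : Fin n → ℕ, Relation.TransGen E α α) ∧
    ∀ α γ : Fin n → ℕ, α ≠ γ →
      Set.ncard {w | E α w ∧ E γ w} ≤ N.card := by
  constructor
  · rintro ⟨α, hα⟩
    refine Relation.not_transGen_self_of_lt (fun v => ∑ j, v j) ?_ α hα
    intro a b hab
    obtain ⟨u, hu, rfl⟩ := (hE a b).1 hab
    rw [sum_add_eq_of_sum_eq (hdeg u hu)]
    omega
  · intro α γ _
    have hfin : {w | E α w}.Finite := by
      rw [setOf_eq_image_add_of_iff_exists hE]
      exact N.finite_toSet.image _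
    calc Set.ncard {w | E α w ∧ E γ w} = ({w | E α w} ∩ {w | E γ w}).ncard := rfl
      _ ≤ {w | E α w}.ncard := Set.ncard_inter_le_ncard_left _ _ hfin
      _ ≤ N.card := ncard_setOf_le_card_of_iff_exists hE α

/-- The directed graph on `Fin n → ℕ` induced by the multiplication operator by a
homogeneous polynomial `θ = Σ_{u ∈ N} a_u z^u` of degree `η ≥ 1` (edges `α → α + u` for
`u ∈ N`) is a generalized directed semi-tree with parameter `c' ≤ card N`: it has no
circuit, and any two distinct vertices have at most `card N` common children. -/
theorem stmt_15 (n η : ℕ) (hn : 1 ≤ n) (hη : 1 ≤ η)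
    (N : Finset (Fin n → ℕ)) (hN : N.Nonempty)
    (hdeg : ∀ u ∈ N, (∑ j : Fin n, u j) = η)
    (E : (Fin n → ℕ) → (Fin n → ℕ) → Prop)
    (hE : ∀ α γ : Fin n → ℕ, E α γ ↔ ∃ u ∈ N, γ = α + u) :
    (¬ ∃ α : Fin n → ℕ, Relation.TransGen E α α) ∧
    ∀ α γ : Fin n → ℕ, α ≠ γ →
      Set.ncard {w | E α w ∧ E γ w} ≤ N.card :=
  stmt_15_general n η hη N hdeg E hE
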